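/- Let (e_n) be a normalised Schauder basis of a Banach space X such that every normalised block sequence (x_n) is equivalent to its shift (x_{n+1}). Then (e_n) is unconditional. -/

import Mathlib

open Filter Topology

noncomputable section

structure SchauderBasis' (X : Type*) [NormedAddCommGroup X] [NormedSpace ℝ X] where
  e : ℕ → X
  coord : ℕ → X →L[ℝ] ℝ
  biorth : ∀ n m, coord n (e m) = if n = m then 1 else 0
  expansion : ∀ x : X,
    Filter.Tendsto (fun N => ∑ n ∈ Finset.range N, coord n x • e n) Filter.atTop (nhds x)
  normalised : ∀ n, ‖e n‖ = 1

section Defs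

variable {X Y : Type*} [NormedAddCommGroup X] [NormedSpace ℝ X]
  [NormedAddCommGroup Y] [NormedSpace ℝ Y]

/-- Convergence of the series `∑ x n` (of partial sums). -/
def Converges (x : ℕ → X) : Prop :=
  ∃ s, Filter.Tendsto (fun N => ∑ n ∈ Finset.range N, x n) Filter.atTop (nhds s)

/-- Two sequences are equivalent if the same scalar series converge. -/
def SeqEquiv (x : ℕ → X) (y : ℕ → Y) : Prop :=
  ∀ a : ℕ → ℝ, Converges (fun n => a n • x n) ↔ Converges (fun n => a n • y n)

/-- `C`-equivalence of two sequences. -/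
def CEquiv (C : ℝ) (x : ℕ → X) (y : ℕ → Y) : Prop :=
  ∀ (a : ℕ → ℝ) (N : ℕ),
    C⁻¹ * ‖∑ n ∈ Finset.range N, a n • y n‖ ≤ ‖∑ n ∈ Finset.range N, a n • x n‖ ∧
    ‖∑ n ∈ Finset.range N, a n • x n‖ ≤ C * ‖∑ n ∈ Finset.range N, a n • y n‖

/-- A basic sequence: uniformly bounded partial-sum projections. -/
def IsBasicSeq (x : ℕ → X) : Prop :=
  ∃ K, 1 ≤ K ∧ ∀ (a : ℕ → ℝ) (m n : ℕ), m ≤ n →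
    ‖∑ i ∈ Finset.range m, a i • x i‖ ≤ K * ‖∑ i ∈ Finset.range n, a i • x i‖

/-- A sequence of signs. -/
def IsSigns (θ : ℕ → ℝ) : Prop := ∀ n, θ n = 1 ∨ θ n = -1

end Defs

namespace SchauderBasis'

variable {X : Type*} [NormedAddCommGroup X] [NormedSpace ℝ X] (b : SchauderBasis' X)

/-- Support of a vector with respect to the basis. -/
def supp (x : X) : Set ℕ := {n | b.coord n x ≠ 0}

/-- A normalised block sequence of the basis. -/
def IsBlockSeq (x : ℕ → X) : Prop :=
  (∀ n, ‖x n‖ = 1) ∧ (∀ n, (b.supp (x n)).Finite) ∧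
  ∀ n, ∀ i ∈ b.supp (x n), ∀ j ∈ b.supp (x (n+1)), i < j

/-- Unconditionality of the basis. -/
def Unconditional : Prop :=
  ∀ θ : ℕ → ℝ, IsSigns θ → SeqEquiv (fun n => θ n • b.e n) b.e

/-- 1-unconditionality (finite-sum form). -/
def OneUnconditional : Prop :=
  ∀ (θ a : ℕ → ℝ), IsSigns θ → ∀ N,
    ‖∑ n ∈ Finset.range N, (θ n * a n) • b.e n‖ ≤ ‖∑ n ∈ Finset.range N, a n • b.e n‖

/-- The shift property: every normalised block sequence is equivalent to its shift. -/
def ShiftProperty : Prop :=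
  ∀ x : ℕ → X, b.IsBlockSeq x → SeqEquiv x (fun n => x (n+1))

/-- The basis is shrinking. -/
def Shrinking : Prop :=
  ∀ f : X →L[ℝ] ℝ, Filter.Tendsto
    (fun n => sSup ((fun y => |f y|) ''
      {y | y ∈ Submodule.span ℝ (Set.range fun i => b.e (n + i)) ∧ ‖y‖ ≤ 1}))
    Filter.atTop (nhds 0)

/-- The basis is boundedly complete. -/
def BoundedlyComplete : Prop :=
  ∀ a : ℕ → ℝ, (∃ M, ∀ N, ‖∑ i ∈ Finset.range N, a i • b.e i‖ ≤ M) →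
    Converges (fun i => a i • b.e i)

end SchauderBasis'

section SeqEquiv

variable {X Y Z : Type*} [NormedAddCommGroup X] [NormedSpace ℝ X]
  [NormedAddCommGroup Y] [NormedSpace ℝ Y] [NormedAddCommGroup Z] [NormedSpace ℝ Z]

theorem SeqEquiv.symm {x : ℕ → X} {y : ℕ → Y} (h : SeqEquiv x y) : SeqEquiv y x :=
  fun a => (h a).symm

theorem SeqEquiv.trans {x : ℕ → X} {y : ℕ → Y} {z : ℕ → Z} (hxy : SeqEquiv x y)
    (hyz : SeqEquiv y z) : SeqEquiv x z :=
  fun a => (hxy a).trans (hyz a)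

theorem SeqEquiv.smul {x : ℕ → X} {y : ℕ → Y} (h : SeqEquiv x y) (c : ℕ → ℝ) :
    SeqEquiv (fun n => c n • x n) (fun n => c n • y n) := by
  intro a
  simpa only [smul_smul] using h (fun n => a n * c n)

end SeqEquiv

theorem IsSigns.abs_eq_one {θ : ℕ → ℝ} (hθ : IsSigns θ) (n : ℕ) : |θ n| = 1 := by
  rcases hθ n with h | h <;> simp [h]

theorem IsSigns.mul_self {θ : ℕ → ℝ} (hθ : IsSigns θ) (n : ℕ) : θ n * θ n = 1 := by
  rcases hθ n with h | h <;> simp [h]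

theorem IsSigns.prod_range {θ : ℕ → ℝ} (hθ : IsSigns θ) :
    IsSigns (fun j => ∏ i ∈ Finset.range j, θ i) := by
  intro n
  induction n with
  | zero => simp
  | succ n ih =>
    simp only [Finset.prod_range_succ] at ih ⊢
    rcases ih with h | h <;> rcases hθ n with h' | h' <;> simp [h, h']

namespace SchauderBasis'

variable {X : Type*} [NormedAddCommGroup X] [NormedSpace ℝ X] (b : SchauderBasis' X)

theorem supp_smul_e_subset (c : ℝ) (n : ℕ) : b.supp (c • b.e n) ⊆ {n} := by
  intro m hm
  simp only [supp, Set.mem_ofPred_eq, map_smul, b.biorth, smul_eq_mul, mul_ite, mul_one,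
    mul_zero, ne_eq, ite_eq_right_iff, Classical.not_imp] at hm
  exact hm.1

theorem isBlockSeq_smul_e {c : ℕ → ℝ} (hc : ∀ n, |c n| = 1) :
    b.IsBlockSeq (fun n => c n • b.e n) := by
  refine ⟨fun n => ?_, fun n => (Set.finite_singleton n).subset (b.supp_smul_e_subset _ n),
    fun n i hi j hj => ?_⟩
  · rw [norm_smul, Real.norm_eq_abs, hc n, b.normalised n, one_mul]
  · rw [b.supp_smul_e_subset _ n hi, b.supp_smul_e_subset _ (n + 1) hj]
    exact n.lt_succ_self

theorem isBlockSeq_e : b.IsBlockSeq b.e := by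
  simpa using b.isBlockSeq_smul_e (c := fun _ => 1) (fun _ => abs_one)

end SchauderBasis'

theorem shift_property_imp_unconditional
    {X : Type*} [NormedAddCommGroup X] [NormedSpace ℝ X]
    (b : SchauderBasis' X) (hshift : b.ShiftProperty) :
    b.Unconditional := by
  intro θ hθ
  -- With `ε j = θ 0 ⋯ θ (j-1)` we have `θ j = ε (j+1) * ε j`, so multiplying the shift
  -- equivalence of the block sequence `(ε j • e j)` by `ε (j+1)` turns it into an
  -- equivalence of `(θ j • e j)` with `(e (j+1))`, which is equivalent to `(e j)`.
  set ε : ℕ → ℝ := fun j => ∏ i ∈ Finset.range j, θ i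
  have hε : IsSigns ε := hθ.prod_range
  have hθε : (fun j => ε (j + 1) • ε j • b.e j) = fun j => θ j • b.e j := by
    funext j
    rw [smul_smul, show ε (j + 1) = ε j * θ j from Finset.prod_range_succ _ _, mul_right_comm,
      hε.mul_self, one_mul]
  have hεsq : (fun j => ε (j + 1) • ε (j + 1) • b.e (j + 1)) = fun j => b.e (j + 1) := by
    funext j
    rw [smul_smul, hε.mul_self, one_smul]
  have hsigned := (hshift _ (b.isBlockSeq_smul_e hε.abs_eq_one)).smul (fun j => ε (j + 1))
  rw [hθε, hεsq] at hsigned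
  exact hsigned.trans (hshift b.e b.isBlockSeq_e).symm
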